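/- arXiv:2604.13431 — 8 statements merged into one kernel-verified Lean document; each statement's English description precedes it below -/
import Mathlib

section
/- Let M ∈ F^{r×k} be full-rank with r ≤ k, let I be the set produced by the decreasing-index greedy column-selection procedure, and let w_1 > w_2 > ... > w_k be integers. Then for every J ⊆ [k] of size r with M_J nonsingular, Σ_{i∈I} w_i ≤ Σ_{i∈J} w_i, with equality if and only if I = J. -/
open Classical in
/-- The greedy column-selection procedure: process column indices of `M` in
decreasing order, adding index `i` to the current set `I` whenever the `i`-th
column of `M` does not lie in the span of the columns indexed by `I`. -/
noncomputable def greedySet {F : Type*} [Field F] {r k : ℕ}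
    (M : Matrix (Fin r) (Fin k) F) : Finset (Fin k) :=
  ((List.finRange k).reverse).foldl
    (fun I i =>
      if (fun a => M a i) ∈
          Submodule.span F ((fun j (a : Fin r) => M a j) '' (I : Set (Fin k)))
      then I else insert i I) ∅


/-!
The greedy set `G` is linearly independent, and scanning indices downwards guarantees that every
column `i` lies in the span of the columns of `G` with index at least `i`. Hence, for every
threshold `t`, the columns of `J` with index `≥ t` lie in the span of the columns of `G` with
index `≥ t`, so by counting dimensions `J` has at most as many indices `≥ t` as `G`; in particular
`#J ≤ #G ≤ r = #J`. This tail dominance forces the `m`-th smallest index of `G` to be at least the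
`m`-th smallest index of `J`, and as `w` is strictly decreasing the weights compare termwise.
-/

open Finset Submodule

section Greedy

variable {K V ι : Type*} [Field K] [AddCommGroup V] [Module K V] [DecidableEq ι]

variable (K) in
open Classical in
noncomputable def greedyStep (v : ι → V) (I : Finset ι) (i : ι) : Finset ι :=
  if v i ∈ span K (v '' I) then I else insert i I

variable {v : ι → V} {I : Finset ι} {i : ι}

theorem subset_greedyStep : I ⊆ greedyStep K v I i := by
  unfold greedyStep
  split_ifs
  exacts [subset_rfl, subset_insert i I]

theorem greedyStep_subset_insert : greedyStep K v I i ⊆ insert i I := by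
  unfold greedyStep
  split_ifs
  exacts [subset_insert i I, subset_rfl]

theorem mem_span_greedyStep : v i ∈ span K (v '' greedyStep K v I i) := by
  unfold greedyStep
  split_ifs with h
  · exact h
  · exact subset_span ⟨i, by simp⟩

theorem linearIndepOn_greedyStep (hI : LinearIndepOn K v I) :
    LinearIndepOn K v (greedyStep K v I i) := by
  unfold greedyStep
  split_ifs with h
  · exact hI
  · rw [coe_insert]
    exact (linearIndepOn_insert fun hi => h (subset_span ⟨i, hi, rfl⟩)).mpr ⟨hI, h⟩

theorem subset_foldl_greedyStep (l : List ι) : I ⊆ l.foldl (greedyStep K v) I := by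
  induction l generalizing I with
  | nil => exact subset_rfl
  | cons a l ih => exact subset_greedyStep.trans ih

theorem linearIndepOn_foldl_greedyStep (hI : LinearIndepOn K v I) (l : List ι) :
    LinearIndepOn K v (l.foldl (greedyStep K v) I : Finset ι) := by
  induction l generalizing I with
  | nil => exact hI
  | cons a l ih => exact ih (linearIndepOn_greedyStep hI)

theorem mem_span_foldl_greedyStep [LinearOrder ι] {l : List ι} (hl : l.Pairwise (· > ·))
    (hI : ∀ j ∈ I, ∀ i ∈ l, i < j) (hi : i ∈ l) :
    v i ∈ span K (v '' {j ∈ l.foldl (greedyStep K v) I | i ≤ j}) := by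
  induction l generalizing I with
  | nil => simp at hi
  | cons a l ih =>
    rw [List.pairwise_cons] at hl
    have hstep : ∀ j ∈ greedyStep K v I a, a ≤ j := fun j hj => by
      rcases mem_insert.mp (greedyStep_subset_insert hj) with rfl | hj
      exacts [le_rfl, (hI j hj a List.mem_cons_self).le]
    rcases List.mem_cons.mp hi with rfl | hi
    · refine span_mono (Set.image_mono fun j hj => ?_) (mem_span_greedyStep (K := K) (I := I))
      exact ⟨subset_foldl_greedyStep (K := K) (v := v) l hj, hstep j hj⟩
    · refine ih hl.2 (fun j hj i' hi' => ?_) hi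
      exact (hl.1 i' hi').trans_le (hstep j hj)

end Greedy

section SpanDominance

variable {K V ι : Type*} [Field K] [AddCommGroup V] [Module K V] {v : ι → V}

theorem finrank_span_image_eq_card {S : Finset ι} (hS : LinearIndepOn K v S) :
    Module.finrank K (span K (v '' S)) = #S := by
  rw [Set.image_eq_range, finrank_span_eq_card hS.linearIndependent]
  simp

theorem card_inter_le_card_inter_of_mem_span [LinearOrder ι] {G J U : Finset ι}
    (hG : LinearIndepOn K v G) (hspan : ∀ i, v i ∈ span K (v '' {j ∈ G | i ≤ j}))
    (hJ : LinearIndepOn K v J) (hU : IsUpperSet (U : Set ι)) : #(J ∩ U) ≤ #(G ∩ U) := by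
  have : FiniteDimensional K (span K (v '' ↑(G ∩ U))) :=
    FiniteDimensional.span_of_finite K ((G ∩ U).finite_toSet.image v)
  rw [← finrank_span_image_eq_card (hJ.mono (by simp)),
    ← finrank_span_image_eq_card (hG.mono (by simp))]
  refine Submodule.finrank_mono (span_le.mpr ?_)
  rintro _ ⟨i, hi, rfl⟩
  rw [mem_coe, mem_inter] at hi
  refine span_mono (Set.image_mono fun j hj => ?_) (hspan i)
  exact mem_inter.mpr ⟨hj.1, hU hj.2 hi.2⟩

end SpanDominance

section TailDominance

variable {ι : Type*} [LinearOrder ι] {n : ℕ} {I J : Finset ι}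

theorem sum_orderEmbOfFin {M : Type*} [AddCommMonoid M] (hI : #I = n) (w : ι → M) :
    ∑ m, w (I.orderEmbOfFin hI m) = ∑ i ∈ I, w i := by
  conv_rhs => rw [← map_orderEmbOfFin_univ I hI, sum_map]
  rfl

variable [LocallyFiniteOrderTop ι]

theorem orderEmbOfFin_le_of_card_inter_Ici_le (hI : #I = n) (hJ : #J = n)
    (h : ∀ t, #(J ∩ Ici t) ≤ #(I ∩ Ici t)) (m : Fin n) :
    J.orderEmbOfFin hJ m ≤ I.orderEmbOfFin hI m := by
  -- If `I_m < t := J_m`, then `J` has at least `n - m` indices `≥ t` but `I` at most `n - 1 - m`.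
  by_contra! hlt
  set t := J.orderEmbOfFin hJ m
  have hJt : n - m ≤ #(J ∩ Ici t) :=
    calc n - m = #((Ici m).map (J.orderEmbOfFin hJ).toEmbedding) := by
          rw [card_map, Fin.card_Ici]
      _ ≤ #(J ∩ Ici t) := card_le_card fun j hj => by
          obtain ⟨s, hms, rfl⟩ := mem_map.mp hj
          exact mem_inter.mpr ⟨J.orderEmbOfFin_mem hJ s,
            mem_Ici.mpr ((J.orderEmbOfFin hJ).monotone (mem_Ici.mp hms))⟩
  have hIt : #(I ∩ Ici t) ≤ n - 1 - m :=
    calc #(I ∩ Ici t) ≤ #((Ioi m).map (I.orderEmbOfFin hI).toEmbedding) :=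
          card_le_card fun j hj => by
            obtain ⟨hjI, htj⟩ := mem_inter.mp hj
            obtain ⟨s, rfl⟩ : j ∈ Set.range (I.orderEmbOfFin hI) := by
              rwa [range_orderEmbOfFin]
            refine mem_map_of_mem _ (mem_Ioi.mpr ?_)
            by_contra! hsm
            exact (((I.orderEmbOfFin hI).monotone hsm).trans_lt hlt).not_ge (mem_Ici.mp htj)
      _ = n - 1 - m := by rw [card_map, Fin.card_Ioi]
  have := h t
  omega

theorem sum_le_sum_of_card_inter_Ici_le {M : Type*} [AddCommMonoid M] [PartialOrder M]
    [IsOrderedCancelAddMonoid M] {w : ι → M} (hw : StrictAnti w) (hIJ : #I = #J)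
    (h : ∀ t, #(J ∩ Ici t) ≤ #(I ∩ Ici t)) :
    ∑ i ∈ I, w i ≤ ∑ i ∈ J, w i ∧ (∑ i ∈ I, w i = ∑ i ∈ J, w i ↔ I = J) := by
  have hle (m : Fin #J) : w (I.orderEmbOfFin hIJ m) ≤ w (J.orderEmbOfFin rfl m) :=
    hw.antitone (orderEmbOfFin_le_of_card_inter_Ici_le hIJ rfl h m)
  rw [← sum_orderEmbOfFin hIJ w, ← sum_orderEmbOfFin (I := J) rfl w]
  refine ⟨sum_le_sum fun m _ => hle m, ⟨fun heq => ?_, fun hIJ' => by subst hIJ'; rfl⟩⟩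
  have hemb : I.orderEmbOfFin hIJ = J.orderEmbOfFin rfl := by
    ext m
    exact hw.injective ((sum_eq_sum_iff_of_le fun m _ => hle m).mp heq m (mem_univ m))
  rw [← image_orderEmbOfFin_univ I hIJ, hemb, image_orderEmbOfFin_univ]

end TailDominance

theorem linearIndepOn_col_of_det_submatrix_ne_zero {K ι : Type*} [Field K] [LinearOrder ι]
    {r : ℕ} {M : Matrix (Fin r) ι K} {J : Finset ι} (hJ : #J = r)
    (hdet : (M.submatrix id fun j => ((J.orderIsoOfFin hJ j : J) : ι)).det ≠ 0) :
    LinearIndepOn K M.col J := by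
  simp_rw [coe_orderIsoOfFin_apply] at hdet
  have hcols : LinearIndependent K (M.col ∘ J.orderEmbOfFin hJ) :=
    Matrix.linearIndependent_cols_iff_isUnit.mpr
      ((Matrix.isUnit_iff_isUnit_det _).mpr hdet.isUnit)
  rwa [← linearIndepOn_range_iff (J.orderEmbOfFin hJ).injective, range_orderEmbOfFin] at hcols

theorem greedySet_minimizes_weight_general {F : Type*} [Field F] {r k : ℕ}
    (M : Matrix (Fin r) (Fin k) F)
    (w : Fin k → ℤ) (hw : StrictAnti w)
    (J : Finset (Fin k)) (hJ : J.card = r)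
    (hJns :
      (M.submatrix id (fun j : Fin r => ((J.orderIsoOfFin hJ j : J) : Fin k))).det ≠ 0) :
    (∑ i ∈ greedySet M, w i) ≤ (∑ i ∈ J, w i) ∧
      ((∑ i ∈ greedySet M, w i) = (∑ i ∈ J, w i) ↔ greedySet M = J) := by
  have hgreedy : greedySet M = (List.finRange k).reverse.foldl (greedyStep F M.col) ∅ := rfl
  have hG : LinearIndepOn F M.col (greedySet M) :=
    hgreedy ▸ linearIndepOn_foldl_greedyStep (by simp) _
  have hspan (i : Fin k) : M.col i ∈ span F (M.col '' {j ∈ greedySet M | i ≤ j}) :=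
    hgreedy ▸ mem_span_foldl_greedyStep (List.pairwise_reverse.mpr (List.pairwise_lt_finRange k))
      (by simp) (by simp)
  have hJ' := linearIndepOn_col_of_det_submatrix_ne_zero hJ hJns
  have hdom {U : Finset (Fin k)} (hU : IsUpperSet (U : Set (Fin k))) :=
    card_inter_le_card_inter_of_mem_span hG hspan hJ' hU
  have hcard : #(greedySet M) = #J := by
    refine le_antisymm ?_ (by simpa using hdom (U := univ) (by simpa using isUpperSet_univ))
    simpa [hJ] using hG.linearIndependent.fintype_card_le_finrank
  exact sum_le_sum_of_card_inter_Ici_le hw hcard fun t => hdom (by simpa using isUpperSet_Ici t)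

/-- Let `M ∈ F^{r×k}` be full-rank with `r ≤ k`, let `I` be the
greedy set, and let `w_1 > w_2 > ⋯ > w_k` be integers. Then for every `J ⊆ [k]`
of size `r` with `M_J` nonsingular, `∑_{i∈I} w_i ≤ ∑_{i∈J} w_i`, with equality
iff `I = J`. -/
theorem greedySet_minimizes_weight {F : Type*} [Field F] {r k : ℕ}
    (hrk : r ≤ k) (M : Matrix (Fin r) (Fin k) F) (hM : M.rank = r)
    (w : Fin k → ℤ) (hw : StrictAnti w)
    (J : Finset (Fin k)) (hJ : J.card = r)
    (hJns :
      (M.submatrix id (fun j : Fin r => ((J.orderIsoOfFin hJ j : J) : Fin k))).det ≠ 0) :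
    (∑ i ∈ greedySet M, w i) ≤ (∑ i ∈ J, w i) ∧
      ((∑ i ∈ greedySet M, w i) = (∑ i ∈ J, w i) ↔ greedySet M = J) :=
  greedySet_minimizes_weight_general M w hw J hJ hJns
end

section
/- Let q ≥ 2 be a real number and r > 0 an integer. Then ∏_{i=1}^r (1 − q^{−i}) ≥ e^{−2/(q−1)}. -/
/-! Writing `x = q⁻¹ ≤ 1/2`, each factor satisfies `1 - xⁱ ≥ exp (-2xⁱ)`, so the product is at
least `exp (-2 ∑ xⁱ)`, and the geometric series gives `∑_{i ≥ 1} xⁱ ≤ x / (1 - x) = 1 / (q - 1)`. -/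

open Finset Real

-- `exp (2x) (1 - x) ≥ (1 + 2x)(1 - x) = 1 + x (1 - 2x) ≥ 1`
lemma exp_neg_two_mul_le_one_sub {x : ℝ} (hx₀ : 0 ≤ x) (hx : x ≤ 1 / 2) :
    exp (-(2 * x)) ≤ 1 - x := by
  have h_exp : 2 * x + 1 ≤ exp (2 * x) := add_one_le_exp _
  have h_inv : exp (-(2 * x)) * exp (2 * x) = 1 := by rw [← exp_add, neg_add_cancel, exp_zero]
  nlinarith [exp_pos (-(2 * x))]

lemma sum_Icc_one_pow_le {x : ℝ} (hx₀ : 0 ≤ x) (hx : x < 1) (r : ℕ) :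
    ∑ i ∈ Icc 1 r, x ^ i ≤ x / (1 - x) := by
  simpa [← Ico_add_one_right_eq_Icc] using
    geom_sum_Ico_le_of_lt_one (m := 1) (n := r + 1) hx₀ hx

lemma exp_le_prod_one_sub_pow {x : ℝ} (hx₀ : 0 ≤ x) (hx : x ≤ 1 / 2) (r : ℕ) :
    exp (-(2 * (x / (1 - x)))) ≤ ∏ i ∈ Icc 1 r, (1 - x ^ i) := by
  have hx_pow : ∀ i ∈ Icc 1 r, x ^ i ≤ 1 / 2 := fun i hi =>
    (pow_le_of_le_one hx₀ (by linarith) (Nat.one_le_iff_ne_zero.1 (mem_Icc.1 hi).1)).trans hx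
  calc exp (-(2 * (x / (1 - x))))
      ≤ exp (-(2 * ∑ i ∈ Icc 1 r, x ^ i)) := by
        gcongr; exact sum_Icc_one_pow_le hx₀ (by linarith) r
    _ = ∏ i ∈ Icc 1 r, exp (-(2 * x ^ i)) := by
        rw [← exp_sum, mul_sum, sum_neg_distrib]
    _ ≤ ∏ i ∈ Icc 1 r, (1 - x ^ i) :=
        prod_le_prod (fun _ _ => (exp_pos _).le)
          fun i hi => exp_neg_two_mul_le_one_sub (by positivity) (hx_pow i hi)

theorem prod_one_sub_pow_ge_general {q : ℝ} (hq : 2 ≤ q) {r : ℕ} :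
    Real.exp (-2 / (q - 1)) ≤ ∏ i ∈ Finset.Icc 1 r, (1 - q ^ (-(i : ℤ))) := by
  have hq₀ : 0 < q := by linarith
  have h_ratio : q⁻¹ / (1 - q⁻¹) = 1 / (q - 1) := by field_simp
  have h_bound := exp_le_prod_one_sub_pow (inv_nonneg.2 hq₀.le)
    (by rw [one_div]; exact inv_anti₀ two_pos hq) r
  rw [h_ratio, mul_one_div, ← neg_div] at h_bound
  simpa only [zpow_neg, zpow_natCast, inv_pow] using h_bound

/-- For a real number `q ≥ 2` and a positive integer `r`,
`∏_{i=1}^r (1 − q^{−i}) ≥ e^{−2/(q−1)}`. -/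
theorem prod_one_sub_pow_ge {q : ℝ} (hq : 2 ≤ q) {r : ℕ} (hr : 0 < r) :
    Real.exp (-2 / (q - 1)) ≤ ∏ i ∈ Finset.Icc 1 r, (1 - q ^ (-(i : ℤ))) :=
  prod_one_sub_pow_ge_general hq
end

section
/- Let r ≤ k be positive integers and F a field. Let E be a collection of r×k matrices over F, each of rank r. Then E is a (k,r,L) lossless rank extractor if and only if the collection {rowspan(E) : E ∈ E} of r-dimensional subspaces of F^k is a (k−r, L) weak subspace design, i.e., for every subspace W ⊆ F^k of dimension k−r, at most L of the row spaces intersect W nontrivially. -/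
/-!
If `A` has full row rank `r`, then `x ↦ x A` is injective, so a nonzero `x` with `x A M = 0` is
the same as a nonzero vector of `rowspan A` killed by `M`: `rank (A M) < r` iff `rowspan A` meets
`ker M` nontrivially (kernels taken on row vectors). The kernels of the rank-`r` matrices
`M ∈ F^{k×r}` are exactly the subspaces of dimension `k - r` (any such `W` is the kernel of
`F^k → F^k ⧸ W ≅ F^r`), so both conditions count over the same family of subspaces.
-/

open Matrix Submodule Module

theorem Submodule.comap_eq_bot_iff_range_inf_eq_bot {R M N : Type*} [Ring R]
    [AddCommGroup M] [AddCommGroup N] [Module R M] [Module R N] {f : M →ₗ[R] N}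
    (hf : Function.Injective f) (q : Submodule R N) :
    q.comap f = ⊥ ↔ LinearMap.range f ⊓ q = ⊥ := by
  rw [← map_comap_eq, ← map_bot f, (map_injective_of_injective hf).eq_iff]

namespace Matrix

variable {F : Type*} [Field F] {m n o : Type*} [Fintype m] [Fintype n]

theorem vecMulLinear_mul (A : Matrix m n F) (B : Matrix n o F) :
    (A * B).vecMulLinear = B.vecMulLinear ∘ₗ A.vecMulLinear := by
  ext x
  simp [vecMul_vecMul]

theorem rank_add_finrank_ker_vecMulLinear (A : Matrix m n F) :
    A.rank + finrank F (LinearMap.ker A.vecMulLinear) = Fintype.card m := by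
  rw [rank_eq_finrank_span_row, ← range_vecMulLinear, LinearMap.finrank_range_add_finrank_ker,
    finrank_fintype_fun_eq_card]

theorem rank_lt_card_height_iff_ker_vecMulLinear_ne_bot (A : Matrix m n F) :
    A.rank < Fintype.card m ↔ LinearMap.ker A.vecMulLinear ≠ ⊥ := by
  rw [Ne, ← Submodule.finrank_eq_zero]
  have := A.rank_add_finrank_ker_vecMulLinear
  omega

theorem rank_mul_lt_iff_span_inf_ker_vecMulLinear_ne_bot [Fintype o] {A : Matrix m n F}
    (hA : A.rank = Fintype.card m) (B : Matrix n o F) :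
    (A * B).rank < Fintype.card m ↔
      span F (Set.range A) ⊓ LinearMap.ker B.vecMulLinear ≠ ⊥ := by
  have hinj : Function.Injective A.vecMulLinear := by
    rw [← LinearMap.ker_eq_bot]
    by_contra h
    exact (A.rank_lt_card_height_iff_ker_vecMulLinear_ne_bot.2 h).ne hA
  rw [rank_lt_card_height_iff_ker_vecMulLinear_ne_bot, vecMulLinear_mul, LinearMap.ker_comp,
    Ne, comap_eq_bot_iff_range_inf_eq_bot hinj, range_vecMulLinear]
  rfl

theorem exists_rank_eq_and_ker_vecMulLinear_eq [Fintype o] (W : Submodule F (n → F))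
    (hW : finrank F W + Fintype.card o = Fintype.card n) :
    ∃ B : Matrix n o F, B.rank = Fintype.card o ∧ LinearMap.ker B.vecMulLinear = W := by
  classical
  have hquot : finrank F ((n → F) ⧸ W) = finrank F (o → F) := by
    have := W.finrank_quotient_add_finrank
    rw [finrank_fintype_fun_eq_card] at this ⊢
    omega
  let f := (LinearEquiv.ofFinrankEq _ _ hquot).toLinearMap ∘ₗ W.mkQ
  have hker : LinearMap.ker (LinearMap.toMatrix' f)ᵀ.vecMulLinear = W := by
    rw [vecMulLinear_transpose, ← toLin'_apply', toLin'_toMatrix', LinearEquiv.ker_comp, ker_mkQ]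
  refine ⟨(LinearMap.toMatrix' f)ᵀ, ?_, hker⟩
  have := rank_add_finrank_ker_vecMulLinear (LinearMap.toMatrix' f)ᵀ
  rw [hker] at this
  omega

end Matrix

open Classical in
theorem losslessRankExtractor_iff_weakSubspaceDesign_general
    {F : Type*} [Field F] {r k n L : ℕ} (hrk : r ≤ k)
    (E : Fin n → Matrix (Fin r) (Fin k) F)
    (hE : ∀ i, (E i).rank = r) :
    (∀ M : Matrix (Fin k) (Fin r) F, M.rank = r →
        (Finset.univ.filter fun i => ((E i) * M).rank < r).card ≤ L) ↔
      (∀ W : Submodule F (Fin k → F), Module.finrank F W = k - r →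
        (Finset.univ.filter fun i =>
            Submodule.span F (Set.range (E i)) ⊓ W ≠ ⊥).card ≤ L) := by
  have hE_card (i) : (E i).rank = Fintype.card (Fin r) := by rw [hE, Fintype.card_fin]
  have filter_eq (M : Matrix (Fin k) (Fin r) F) :
      (Finset.univ.filter fun i => ((E i) * M).rank < r) =
        Finset.univ.filter fun i =>
          span F (Set.range (E i)) ⊓ LinearMap.ker M.vecMulLinear ≠ ⊥ :=
    Finset.filter_congr fun i _ => by
      simpa using rank_mul_lt_iff_span_inf_ker_vecMulLinear_ne_bot (hE_card i) M
  constructor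
  · intro hext W hW
    obtain ⟨M, hM, rfl⟩ := exists_rank_eq_and_ker_vecMulLinear_eq (o := Fin r) W
      (by simp only [hW, Fintype.card_fin]; omega)
    exact filter_eq M ▸ hext M (by simpa using hM)
  · intro hdes M hM
    have hW : finrank F (LinearMap.ker M.vecMulLinear) = k - r := by
      have := M.rank_add_finrank_ker_vecMulLinear
      simp only [hM, Fintype.card_fin] at this
      omega
    exact (filter_eq M).symm ▸ hdes _ hW

open Classical in
/-- Let `r ≤ k` and let `E : Fin n → F^{r×k}` be a collection of
matrices, each of rank `r`. Then `E` is a `(k,r,L)` lossless rank extractor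
(for every rank-`r` matrix `M ∈ F^{k×r}`, at most `L` indices `i` have
`rank (E i * M) < r`) iff the collection of row spaces is a `(k−r, L)` weak
subspace design (for every subspace `W` of dimension `k−r`, at most `L` indices
`i` have `rowspan (E i) ∩ W ≠ {0}`). -/
theorem losslessRankExtractor_iff_weakSubspaceDesign
    {F : Type*} [Field F] {r k n L : ℕ} (hr : 0 < r) (hrk : r ≤ k)
    (E : Fin n → Matrix (Fin r) (Fin k) F)
    (hE : ∀ i, (E i).rank = r) :
    (∀ M : Matrix (Fin k) (Fin r) F, M.rank = r →
        (Finset.univ.filter fun i => ((E i) * M).rank < r).card ≤ L) ↔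
      (∀ W : Submodule F (Fin k → F), Module.finrank F W = k - r →
        (Finset.univ.filter fun i =>
            Submodule.span F (Set.range (E i)) ⊓ W ≠ ⊥).card ≤ L) :=
  losslessRankExtractor_iff_weakSubspaceDesign_general hrk E hE
end

section
/- Let F be a field with a nondegenerate standard bilinear form on F^k, let U ⊆ F^k have dimension r, and let V ⊆ F^k have dimension r. Then V^⊥ ∩ U ≠ {0} if and only if V ∩ U^⊥ ≠ {0}. -/
/-- The orthogonal complement of a subspace of `F^k` with respect to the
standard bilinear form (dot product). -/
def stdPerp {F : Type*} [Field F] {k : ℕ} (W : Submodule F (Fin k → F)) :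
    Submodule F (Fin k → F) where
  carrier := {x | ∀ w ∈ W, dotProduct x w = 0}
  add_mem' := by
    intro a b ha hb w hw
    simp [add_dotProduct, ha w hw, hb w hw]
  zero_mem' := by
    intro w hw
    simp [zero_dotProduct]
  smul_mem' := by
    intro c a ha w hw
    simp [smul_dotProduct, ha w hw]

/-!
Since `V ⊓ Uᗮ = (Vᗮ ⊔ U)ᗮ` for a nondegenerate reflexive form on a `k`-dimensional space,
`dim (V ⊓ Uᗮ) = k - dim (Vᗮ ⊔ U) = dim (Vᗮ ⊓ U) + dim V - dim U`. So when `dim U = dim V`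
the two intersections have the same dimension, and in particular one is zero iff the other is.
-/

open Module
open LinearMap (BilinForm)

namespace LinearMap.BilinForm

variable {R M : Type*} [CommSemiring R] [AddCommMonoid M] [Module R M]

theorem orthogonal_sup (B : BilinForm R M) (N L : Submodule R M) :
    B.orthogonal (N ⊔ L) = B.orthogonal N ⊓ B.orthogonal L := by
  refine le_antisymm (le_inf (orthogonal_le le_sup_left) (orthogonal_le le_sup_right)) ?_
  intro x hx y hy
  obtain ⟨hxN, hxL⟩ := Submodule.mem_inf.mp hx
  obtain ⟨n, hn, l, hl, rfl⟩ := Submodule.mem_sup.mp hy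
  rw [mem_orthogonal_iff] at hxN hxL
  simp [hxN n hn, hxL l hl]

variable {K V : Type*} [Field K] [AddCommGroup V] [Module K V] [FiniteDimensional K V]

theorem finrank_orthogonal_inf_add_finrank {B : BilinForm K V} (hB : B.Nondegenerate)
    (hB₀ : B.IsRefl) (U W : Submodule K V) :
    finrank K ↥(B.orthogonal W ⊓ U) + finrank K W =
      finrank K ↥(W ⊓ B.orthogonal U) + finrank K U := by
  have hsup := Submodule.finrank_sup_add_finrank_inf_eq (B.orthogonal W) U
  have hinf :
      finrank K ↥(W ⊓ B.orthogonal U) = finrank K V - finrank K ↥(B.orthogonal W ⊔ U) := by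
    rw [← finrank_orthogonal hB, orthogonal_sup, orthogonal_orthogonal hB hB₀]
  have hW := finrank_orthogonal hB W
  have hWle := Submodule.finrank_le W
  have hsuple := Submodule.finrank_le (B.orthogonal W ⊔ U)
  omega

end LinearMap.BilinForm

section DotProduct

variable {R ι : Type*} [CommSemiring R] [Fintype ι]

theorem isRefl_dotProductBilin : BilinForm.IsRefl (dotProductBilin R R : BilinForm R (ι → R)) :=
  fun x y h => by simpa [dotProduct_comm] using h

theorem nondegenerate_dotProductBilin :
    BilinForm.Nondegenerate (dotProductBilin R R : BilinForm R (ι → R)) := by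
  classical
  exact ⟨fun x hx => funext fun i => by simpa using hx (Pi.single i 1),
    fun y hy => funext fun i => by simpa using hy (Pi.single i 1)⟩

end DotProduct

theorem stdPerp_eq_orthogonal {F : Type*} [Field F] {k : ℕ} (W : Submodule F (Fin k → F)) :
    stdPerp W = BilinForm.orthogonal (dotProductBilin F F) W := by
  ext x
  simp [stdPerp, BilinForm.mem_orthogonal_iff, dotProduct_comm]

theorem perp_inter_ne_bot_iff_general {F : Type*} [Field F] {r k : ℕ}
    (U V : Submodule F (Fin k → F))
    (hU : Module.finrank F U = r) (hV : Module.finrank F V = r) :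
    stdPerp V ⊓ U ≠ ⊥ ↔ V ⊓ stdPerp U ≠ ⊥ := by
  have h := LinearMap.BilinForm.finrank_orthogonal_inf_add_finrank
    nondegenerate_dotProductBilin isRefl_dotProductBilin U V
  rw [hU, hV, Nat.add_right_cancel_iff] at h
  rw [stdPerp_eq_orthogonal, stdPerp_eq_orthogonal, Ne, Ne, ← Submodule.finrank_eq_zero,
    ← Submodule.finrank_eq_zero, h]

/-- Let `U, V ⊆ F^k` both have dimension `r` (with respect to
the standard, nondegenerate, dot-product bilinear form). Then
`V^⊥ ∩ U ≠ {0}` iff `V ∩ U^⊥ ≠ {0}`. -/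
theorem perp_inter_ne_bot_iff {F : Type*} [Field F] {r k : ℕ} (hrk : r ≤ k)
    (U V : Submodule F (Fin k → F))
    (hU : Module.finrank F U = r) (hV : Module.finrank F V = r) :
    stdPerp V ⊓ U ≠ ⊥ ↔ V ⊓ stdPerp U ≠ ⊥ :=
  perp_inter_ne_bot_iff_general U V hU hV
end

section
/- Let F_Q/F_q be a finite extension of finite fields of degree d with basis e_1,...,e_d of F_Q over F_q. Let E ∈ F_Q^{r×k} and M ∈ F_Q^{k×r} with det(EM) ≠ 0. For each row i of E, write E_i = Σ_{t=1}^d e_t E_i^{(t)} with E_i^{(t)} ∈ F_q^k. For σ ∈ [d]^r, let E^{(σ)} ∈ F_q^{r×k} be the matrix whose i-th row is E_i^{(σ_i)}. Then there exists σ ∈ [d]^r such that det(E^{(σ)} M) ≠ 0. -/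
/-!
Expanding each entry of `E` in the basis `b` writes `E * M` as `∑ t, b t • (E⁽ᵗ⁾ * M)`,
where `E⁽ᵗ⁾ = b.coordMatrix E t` collects the `t`-th coordinates of the entries.
Multilinearity of the determinant in the rows expands `det (E * M)` as a sum over
`σ : [r] → [d]` of `(∏ i, b (σ i)) * det (E⁽σ⁾ * M)`, so a nonzero left side forces a
nonzero summand.
-/

open Finset

namespace Matrix

variable {n ι R : Type*} [Fintype n] [DecidableEq n] [Fintype ι] [CommRing R]

theorem det_sum_smul (c : ι → R) (B : ι → Matrix n n R) :
    det (∑ t, c t • B t) = ∑ σ : n → ι, (∏ i, c (σ i)) * det (of fun i => B (σ i) i) := by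
  have hrows : ∑ t, c t • B t = of fun i => ∑ t, c t • B t i := by
    ext i j
    simp [sum_apply]
  rw [hrows]
  refine ((detRowAlternating : AlternatingMap R (n → R) R n).toMultilinearMap.map_sum
    (fun i t => c t • B t i)).trans (sum_congr rfl fun σ _ => ?_)
  exact AlternatingMap.map_smul_univ _ _ _

theorem exists_det_ne_zero_of_det_sum_smul_ne_zero {c : ι → R}
    {B : ι → Matrix n n R} (h : det (∑ t, c t • B t) ≠ 0) :
    ∃ σ : n → ι, det (of fun i => B (σ i) i) ≠ 0 := by
  rw [det_sum_smul] at h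
  obtain ⟨σ, -, hσ⟩ := exists_ne_zero_of_sum_ne_zero h
  exact ⟨σ, right_ne_zero_of_mul hσ⟩

end Matrix

namespace Module.Basis

variable {ι R S m n : Type*} [Fintype ι] [CommSemiring R] [Semiring S] [Algebra R S]

noncomputable def coordMatrix (b : Basis ι R S) (A : Matrix m n S) (t : ι) : Matrix m n S :=
  A.map fun x => algebraMap R S (b.repr x t)

theorem sum_smul_coordMatrix (b : Basis ι R S) (A : Matrix m n S) :
    ∑ t, b t • b.coordMatrix A t = A := by
  ext i j
  simp only [Matrix.sum_apply, Matrix.smul_apply, coordMatrix, Matrix.map_apply, smul_eq_mul]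
  conv_rhs => rw [← b.sum_repr (A i j)]
  exact sum_congr rfl fun t _ => by rw [Algebra.smul_def, Algebra.commutes]

end Module.Basis

theorem exists_coordinate_selection_det_ne_zero_general
    {Fq FQ : Type*} [Field Fq] [Field FQ]
    [Algebra Fq FQ] {d r k : ℕ} (b : Module.Basis (Fin d) Fq FQ)
    (E : Matrix (Fin r) (Fin k) FQ) (M : Matrix (Fin k) (Fin r) FQ)
    (hEM : (E * M).det ≠ 0) :
    ∃ σ : Fin r → Fin d,
      ((Matrix.of fun i j => algebraMap Fq FQ (b.repr (E i j) (σ i))) * M).det ≠ 0 := by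
  rw [← b.sum_smul_coordMatrix E, Matrix.sum_mul] at hEM
  simp only [Matrix.smul_mul] at hEM
  -- row `i` of `b.coordMatrix E (σ i) * M` is, definitionally, row `i` of `E⁽σ⁾ * M`
  exact Matrix.exists_det_ne_zero_of_det_sum_smul_ne_zero hEM

/-- Let `F_Q / F_q` be a degree-`d` extension of finite fields
with basis `e_1, …, e_d` (encoded by a basis `b : Basis (Fin d) Fq FQ`). Let
`E ∈ F_Q^{r×k}` and `M ∈ F_Q^{k×r}` with `det (E * M) ≠ 0`. Writing each row of
`E` as `Σ_t e_t E_i^{(t)}` with `E_i^{(t)} ∈ F_q^k`, and for `σ ∈ [d]^r` letting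
`E^{(σ)}` be the matrix over `F_q` whose `i`-th row is `E_i^{(σ_i)}`, there
exists `σ` with `det (E^{(σ)} M) ≠ 0`. -/
theorem exists_coordinate_selection_det_ne_zero
    {Fq FQ : Type*} [Field Fq] [Field FQ] [Fintype Fq] [Fintype FQ]
    [Algebra Fq FQ] {d r k : ℕ} (b : Module.Basis (Fin d) Fq FQ)
    (E : Matrix (Fin r) (Fin k) FQ) (M : Matrix (Fin k) (Fin r) FQ)
    (hEM : (E * M).det ≠ 0) :
    ∃ σ : Fin r → Fin d,
      ((Matrix.of fun i j => algebraMap Fq FQ (b.repr (E i j) (σ i))) * M).det ≠ 0 :=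
  exists_coordinate_selection_det_ne_zero_general b E M hEM
end

section
/- Let G = F_q^k and let B ⊆ G be a nonempty ε-biased set with ε < q^{−s}, where 1 ≤ s ≤ k. Then B intersects every affine subspace of F_q^k of codimension s; i.e., B is an affine s-blocking set. -/
/-!
Pass to the quotient `Q = F_q^k ⧸ L`, which has `q^s` elements. Orthogonality of the characters
of `Q` counts the points of `B` in the coset `u + L` as `|B| / |Q|` up to an error of at most
`(|Q| - 1) ε |B| / |Q|`, because every nontrivial character of `Q` pulls back to a nontrivial
character of `F_q^k`. For `ε < 1 / |Q|` this count is positive.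
-/

open Finset Function

namespace AddChar

variable {G Q : Type*} [AddCommGroup Q]

lemma sum_sum_apply_sub_eq_card_filter_mul [Fintype Q] [DecidableEq Q] (f : G → Q)
    (B : Finset G) (c : Q) :
    ∑ ψ : AddChar Q ℂ, ∑ x ∈ B, ψ (f x - c) = #{x ∈ B | f x = c} * Fintype.card Q := by
  rw [sum_comm]
  simp_rw [sum_apply_eq_ite, sub_eq_zero]
  rw [sum_ite, sum_const_zero, add_zero, sum_const, nsmul_eq_mul]

variable [AddCommGroup G]

lemma sum_apply_sub_eq_mul_sum_compAddMonoidHom (ψ : AddChar Q ℂ) (f : G →+ Q) (B : Finset G) (c : Q) :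
    ∑ x ∈ B, ψ (f x - c) = ψ (-c) * ∑ x ∈ B, ψ.compAddMonoidHom f x := by
  simp_rw [mul_sum, compAddMonoidHom_apply, ← map_add_eq_mul, neg_add_eq_sub]

theorem abs_card_filter_mul_card_sub_card_le [Fintype Q] [DecidableEq Q] (f : G →+ Q)
    (hf : Surjective f) {B : Finset G} {ε : ℝ}
    (hbias : ∀ χ : AddChar G ℂ, χ ≠ 1 → ‖∑ x ∈ B, χ x‖ ≤ ε * #B) (c : Q) :
    |(#{x ∈ B | f x = c} * Fintype.card Q : ℝ) - #B| ≤ (Fintype.card Q - 1) * (ε * #B) := by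
  set S := ∑ ψ ∈ univ.erase (1 : AddChar Q ℂ), ψ (-c) * ∑ x ∈ B, ψ.compAddMonoidHom f x
  have hsplit : (((#{x ∈ B | f x = c} * Fintype.card Q : ℝ) - #B : ℝ) : ℂ) = S := by
    push_cast
    rw [← sum_sum_apply_sub_eq_card_filter_mul, ← add_sum_erase _ _ (mem_univ 1)]
    simp [S, sum_apply_sub_eq_mul_sum_compAddMonoidHom]
  have hterm : ∀ ψ ∈ univ.erase (1 : AddChar Q ℂ),
      ‖ψ (-c) * ∑ x ∈ B, ψ.compAddMonoidHom f x‖ ≤ ε * #B := by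
    intro ψ hψ
    rw [norm_mul, norm_apply, one_mul]
    refine hbias _ fun h ↦ (mem_erase.1 hψ).1 (compAddMonoidHom_injective_left f hf ?_)
    exact h.trans (by ext; simp)
  calc |(#{x ∈ B | f x = c} * Fintype.card Q : ℝ) - #B| = ‖S‖ := by
        rw [← hsplit, Complex.norm_real, Real.norm_eq_abs]
    _ ≤ ∑ _ψ ∈ univ.erase (1 : AddChar Q ℂ), ε * #B := (norm_sum_le _ _).trans (sum_le_sum hterm)
    _ = (Fintype.card Q - 1) * (ε * #B) := by
        rw [sum_const, card_erase_of_mem (mem_univ _), card_univ, card_eq, nsmul_eq_mul,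
          Nat.cast_pred Fintype.card_pos]

theorem exists_mem_map_eq_of_bias_lt_inv_card [Finite Q] (f : G →+ Q) (hf : Surjective f)
    {B : Finset G} (hB : B.Nonempty) {ε : ℝ}
    (hbias : ∀ χ : AddChar G ℂ, χ ≠ 1 → ‖∑ x ∈ B, χ x‖ ≤ ε * #B)
    (hε : ε < (Nat.card Q : ℝ)⁻¹) (c : Q) : ∃ x ∈ B, f x = c := by
  classical
  have := Fintype.ofFinite Q
  by_contra! hc
  have hbound := abs_card_filter_mul_card_sub_card_le f hf hbias c
  rw [filter_false_of_mem hc, card_empty, Nat.cast_zero, zero_mul, zero_sub, abs_neg,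
    abs_of_nonneg (Nat.cast_nonneg _)] at hbound
  have hBpos : (0 : ℝ) < #B := by exact_mod_cast hB.card_pos
  have hQ : (1 : ℝ) ≤ Fintype.card Q := by exact_mod_cast Fintype.card_pos
  rw [Nat.card_eq_fintype_card] at hε
  have hεQ : ε * Fintype.card Q < 1 := (lt_inv_mul_iff₀' (by positivity)).1 (by rwa [mul_one])
  have h1 : 1 ≤ (Fintype.card Q - 1) * ε :=
    le_of_mul_le_mul_right (by linarith) hBpos
  nlinarith

end AddChar

theorem epsBiased_is_affine_blocking_general
    {Fq : Type*} [Field Fq] [Fintype Fq] {k s : ℕ} (hsk : s ≤ k)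
    (B : Finset (Fin k → Fq)) (hB : B.Nonempty) {ε : ℝ}
    (hbias : ∀ χ : AddChar (Fin k → Fq) ℂ, χ ≠ 1 →
      ‖(∑ x ∈ B, χ x) / (B.card : ℂ)‖ ≤ ε)
    (hε : ε < ((Fintype.card Fq : ℝ)) ^ (-(s : ℤ))) :
    ∀ (u : Fin k → Fq) (L : Submodule Fq (Fin k → Fq)),
      Module.finrank Fq L = k - s → ∃ x ∈ B, ∃ y ∈ L, x = u + y := by
  intro u L hL
  have := Fintype.ofFinite ((Fin k → Fq) ⧸ L)
  have hcard : Nat.card ((Fin k → Fq) ⧸ L) = Fintype.card Fq ^ s := by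
    rw [Nat.card_eq_fintype_card, Module.card_eq_pow_finrank (K := Fq),
      Submodule.finrank_quotient, hL, Module.finrank_fin_fun, Nat.sub_sub_self hsk]
  have hbias' : ∀ χ : AddChar (Fin k → Fq) ℂ, χ ≠ 1 → ‖∑ x ∈ B, χ x‖ ≤ ε * #B := by
    intro χ hχ
    have h := hbias χ hχ
    rwa [norm_div, Complex.norm_natCast, div_le_iff₀ (by exact_mod_cast hB.card_pos)] at h
  have hε' : ε < (Nat.card ((Fin k → Fq) ⧸ L) : ℝ)⁻¹ := by
    rwa [hcard, Nat.cast_pow, ← zpow_natCast, ← zpow_neg]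
  obtain ⟨x, hxB, hx⟩ := AddChar.exists_mem_map_eq_of_bias_lt_inv_card L.mkQ.toAddMonoidHom
    L.mkQ_surjective hB hbias' hε' (L.mkQ u)
  exact ⟨x, hxB, x - u, (Submodule.Quotient.eq L).1 hx, by abel⟩

/-- Let `G = F_q^k` and let `B ⊆ G` be a nonempty `ε`-biased
set with `ε < q^{−s}`, where `1 ≤ s ≤ k`. Then `B` meets every affine subspace
of codimension `s`; i.e., `B` is an affine `s`-blocking set. -/
theorem epsBiased_is_affine_blocking
    {Fq : Type*} [Field Fq] [Fintype Fq] {k s : ℕ} (hs : 1 ≤ s) (hsk : s ≤ k)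
    (B : Finset (Fin k → Fq)) (hB : B.Nonempty) {ε : ℝ}
    (hbias : ∀ χ : AddChar (Fin k → Fq) ℂ, χ ≠ 1 →
      ‖(∑ x ∈ B, χ x) / (B.card : ℂ)‖ ≤ ε)
    (hε : ε < ((Fintype.card Fq : ℝ)) ^ (-(s : ℤ))) :
    ∀ (u : Fin k → Fq) (L : Submodule Fq (Fin k → Fq)),
      Module.finrank Fq L = k - s → ∃ x ∈ B, ∃ y ∈ L, x = u + y :=
  epsBiased_is_affine_blocking_general hsk B hB hbias hε
end

section
/- Let G = F_q^k and let B ⊆ G be a nonempty ε-biased set with ε < (q−1)/(2q^{s+1}), where 1 ≤ s < k. Then for every linear subspace L ⊆ F_q^k of codimension s and every hyperplane H of L (i.e., a subspace of L of codimension 1 in L), B ∩ (L \ H) is nonempty. -/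
/-!
Expanding the indicator of a subgroup `M` in the characters of `G ⧸ M`, the number of points of
`B` in `M` is `#B / [G : M]` up to an error of at most `(1 - 1 / [G : M]) ε #B`: the trivial
character gives the main term, and every nontrivial character of `G ⧸ M` pulls back to a
nontrivial character of `G`. For `L` and `H` of index `q ^ s` and `q ^ (s + 1)` the main terms
differ by `(q - 1) #B / q ^ (s + 1)`, which beats the total error `< 2 ε #B`, so `B` has more
points in `L` than in `H`.
-/

open Finset

section Bias

variable {G : Type*} [AddCommGroup G]

def IsEpsBiased (B : Finset G) (ε : ℝ) : Prop :=
  ∀ χ : AddChar G ℂ, χ ≠ 1 → ‖(∑ x ∈ B, χ x) / (#B : ℂ)‖ ≤ ε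

lemma IsEpsBiased.norm_sum_apply_le {B : Finset G} {ε : ℝ} (hB : IsEpsBiased B ε)
    {χ : AddChar G ℂ} (hχ : χ ≠ 1) : ‖∑ x ∈ B, χ x‖ ≤ ε * #B := by
  rcases B.eq_empty_or_nonempty with rfl | hne
  · simp
  have hbound := hB χ hχ
  rwa [norm_div, Complex.norm_natCast, div_le_iff₀ (by exact_mod_cast hne.card_pos)] at hbound

end Bias

lemma AddChar.compAddMonoidHom_ne_one {A K : Type*} [AddMonoid A] [AddMonoid K]
    {f : A →+ K} (hf : Function.Surjective f) {χ : AddChar K ℂ} (hχ : χ ≠ 1) :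
    χ.compAddMonoidHom f ≠ 1 := by
  obtain ⟨a, ha⟩ := AddChar.ne_one_iff.mp hχ
  obtain ⟨x, rfl⟩ := hf a
  exact AddChar.ne_one_iff.mpr ⟨x, ha⟩

section Counting

variable {G K : Type*} [AddCommGroup G] [AddCommGroup K] [Fintype K] [DecidableEq K]

lemma card_mul_card_filter_eq_zero_eq_sum_addChar (f : G →+ K) (B : Finset G) :
    (Fintype.card K : ℂ) * #(B.filter (f · = 0)) = ∑ χ : AddChar K ℂ, ∑ x ∈ B, χ (f x) := by
  rw [sum_comm]
  simp only [AddChar.sum_apply_eq_ite, sum_ite, sum_const, nsmul_eq_mul,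
    mul_zero, add_zero]
  exact mul_comm _ _

lemma IsEpsBiased.abs_card_mul_card_filter_sub_le {B : Finset G} {ε : ℝ} (hB : IsEpsBiased B ε)
    {f : G →+ K} (hf : Function.Surjective f) :
    |(Fintype.card K : ℝ) * #(B.filter (f · = 0)) - #B| ≤ (Fintype.card K - 1) * (ε * #B) := by
  have hsplit := card_mul_card_filter_eq_zero_eq_sum_addChar f B
  rw [← add_sum_erase _ _ (mem_univ 1)] at hsplit
  simp only [AddChar.one_apply, sum_const, nsmul_eq_mul, mul_one] at hsplit
  have hnontrivial : ∀ χ ∈ (univ : Finset (AddChar K ℂ)).erase 1, ‖∑ x ∈ B, χ (f x)‖ ≤ ε * #B :=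
    fun χ hχ => hB.norm_sum_apply_le (AddChar.compAddMonoidHom_ne_one hf (ne_of_mem_erase hχ))
  calc |(Fintype.card K : ℝ) * #(B.filter (f · = 0)) - #B|
      = ‖∑ χ ∈ (univ : Finset (AddChar K ℂ)).erase 1, ∑ x ∈ B, χ (f x)‖ := by
        rw [← Real.norm_eq_abs, ← Complex.norm_real]
        push_cast
        rw [hsplit, add_sub_cancel_left]
    _ ≤ #((univ : Finset (AddChar K ℂ)).erase 1) • (ε * #B) :=
        (norm_sum_le _ _).trans (sum_le_card_nsmul _ _ _ hnontrivial)
    _ = (Fintype.card K - 1) * (ε * #B) := by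
        rw [card_erase_of_mem (mem_univ _), card_univ, AddChar.card_eq, nsmul_eq_mul,
          Nat.cast_sub Fintype.card_pos, Nat.cast_one]

end Counting

lemma IsEpsBiased.abs_card_pow_mul_card_filter_mem_sub_le {F V : Type*} [Field F] [Fintype F]
    [AddCommGroup V] [Module F V] [FiniteDimensional F V] {B : Finset V} {ε : ℝ}
    (hB : IsEpsBiased B ε) (W : Submodule F V) [DecidablePred (· ∈ W)] :
    |(Fintype.card F : ℝ) ^ (Module.finrank F V - Module.finrank F W) * #(B.filter (· ∈ W)) - #B|
      ≤ ((Fintype.card F : ℝ) ^ (Module.finrank F V - Module.finrank F W) - 1) * (ε * #B) := by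
  classical
  have : Finite (V ⧸ W) := Module.finite_of_finite F
  cases nonempty_fintype (V ⧸ W)
  have hquot := hB.abs_card_mul_card_filter_sub_le (f := W.mkQ.toAddMonoidHom) W.mkQ_surjective
  rw [Fintype.card_eq_nat_card, Module.natCard_eq_pow_finrank (K := F), Submodule.finrank_quotient,
    Nat.card_eq_fintype_card] at hquot
  simpa only [LinearMap.toAddMonoidHom_coe, Submodule.mkQ_apply, Submodule.Quotient.mk_eq_zero,
    Nat.cast_pow] using hquot

lemma lt_of_abs_mul_sub_le {q a n ε c d : ℝ} (hq : 0 ≤ q) (hqa : 1 < q * a) (hn : 0 < n)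
    (hε : 2 * (q * a) * ε < q - 1) (hc : |a * c - n| ≤ (a - 1) * (ε * n))
    (hd : |q * a * d - n| ≤ (q * a - 1) * (ε * n)) : d < c := by
  have hεn : 0 ≤ ε * n := nonneg_of_mul_nonneg_right ((abs_nonneg _).trans hd) (by linarith)
  rw [abs_le] at hc hd
  nlinarith [mul_le_mul_of_nonneg_left hc.1 hq, mul_lt_mul_of_pos_right hε hn]

theorem epsBiased_meets_subspace_off_hyperplane_general
    {Fq : Type*} [Field Fq] [Fintype Fq] {k s : ℕ} (hsk : s < k)
    (B : Finset (Fin k → Fq)) (hB : B.Nonempty) {ε : ℝ}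
    (hbias : ∀ χ : AddChar (Fin k → Fq) ℂ, χ ≠ 1 →
      ‖(∑ x ∈ B, χ x) / (B.card : ℂ)‖ ≤ ε)
    (hε : ε < ((Fintype.card Fq : ℝ) - 1) / (2 * (Fintype.card Fq : ℝ) ^ (s + 1))) :
    ∀ (L H : Submodule Fq (Fin k → Fq)), H ≤ L →
      Module.finrank Fq L = k - s → Module.finrank Fq H = k - s - 1 →
      ∃ x ∈ B, x ∈ L ∧ x ∉ H := by
  classical
  intro L H _ hL hH
  have hq : (1 : ℝ) < Fintype.card Fq := by exact_mod_cast Fintype.one_lt_card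
  have hcodimL : k - Module.finrank Fq L = s := by omega
  have hcodimH : k - Module.finrank Fq H = s + 1 := by omega
  have hbiased : IsEpsBiased B ε := hbias
  have hboundL := hbiased.abs_card_pow_mul_card_filter_mem_sub_le L
  have hboundH := hbiased.abs_card_pow_mul_card_filter_mem_sub_le H
  rw [Module.finrank_fin_fun, hcodimL] at hboundL
  rw [Module.finrank_fin_fun, hcodimH, pow_succ'] at hboundH
  have hlt : #(B.filter (· ∈ H)) < #(B.filter (· ∈ L)) := by
    refine Nat.cast_lt.mp (lt_of_abs_mul_sub_le (Nat.cast_nonneg _) ?_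
      (by exact_mod_cast hB.card_pos) ?_ hboundL hboundH)
    · exact one_lt_mul_of_lt_of_le hq (one_le_pow₀ hq.le)
    · rw [lt_div_iff₀ (mul_pos two_pos (pow_pos (by linarith) _)), pow_succ'] at hε
      linarith
  obtain ⟨x, hxL, hxH⟩ := exists_mem_notMem_of_card_lt_card hlt
  rw [mem_filter] at hxL
  exact ⟨x, hxL.1, hxL.2, fun h => hxH (mem_filter.mpr ⟨hxL.1, h⟩)⟩

/-- Let `G = F_q^k` and let `B ⊆ G` be a nonempty `ε`-biased
set with `ε < (q−1)/(2q^{s+1})`, where `1 ≤ s < k`. Then for every linear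
subspace `L ⊆ F_q^k` of codimension `s` and every hyperplane `H` of `L`
(a subspace of `L` of dimension `k − s − 1`), `B ∩ (L \ H)` is nonempty. -/
theorem epsBiased_meets_subspace_off_hyperplane
    {Fq : Type*} [Field Fq] [Fintype Fq] {k s : ℕ} (hs : 1 ≤ s) (hsk : s < k)
    (B : Finset (Fin k → Fq)) (hB : B.Nonempty) {ε : ℝ}
    (hbias : ∀ χ : AddChar (Fin k → Fq) ℂ, χ ≠ 1 →
      ‖(∑ x ∈ B, χ x) / (B.card : ℂ)‖ ≤ ε)
    (hε : ε < ((Fintype.card Fq : ℝ) - 1) / (2 * (Fintype.card Fq : ℝ) ^ (s + 1))) :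
    ∀ (L H : Submodule Fq (Fin k → Fq)), H ≤ L →
      Module.finrank Fq L = k - s → Module.finrank Fq H = k - s - 1 →
      ∃ x ∈ B, x ∈ L ∧ x ∉ H :=
  epsBiased_meets_subspace_off_hyperplane_general hsk B hB hbias hε
end

section
/- Let s < k be positive integers and q a prime power. Suppose E = {E_1,...,E_n} ⊆ F_q^{(s+1)×k} is a (k, s+1) lossless rank disperser over F_q, i.e., for every M ∈ F_q^{k×(s+1)} of rank s+1 there is some i with rank(E_i M) = s+1. Let V_i = rowspan(E_i). Then for every subspace L ⊆ F_q^k of codimension s and every hyperplane H of L, there exists i ∈ [n] with V_i ∩ L ⊄ H (in particular V_i ∩ (L \ H) ≠ ∅). -/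
/-!
Let `Φ : F_q^k → F_q^{s+1}` be a surjection with kernel `H` (possible since `H` has codimension
`s + 1`). Its transposed matrix `M` has rank `s + 1`, so the disperser gives `i` with
`rank (E_i M) = s + 1`, i.e. `Φ (V_i) = F_q^{s+1}`, i.e. `V_i + H` is the whole space. The modular
law then gives `(V_i ∩ L) + H = L`, which is not `H` because `H` is a proper subspace of `L`.
-/

open Module Submodule Matrix

theorem not_inf_le_of_le_sup_of_lt {α : Type*} [Lattice α] [IsModularLattice α] {V H L : α}
    (hL : L ≤ H ⊔ V) (hHL : H < L) : ¬ V ⊓ L ≤ H := by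
  intro hVL
  have : (H ⊔ V) ⊓ L = H := by
    rw [sup_inf_assoc_of_le V hHL.le, sup_eq_left.2 hVL]
  rw [inf_eq_right.2 hL] at this
  exact hHL.ne this.symm

theorem Submodule.exists_surjective_ker_eq {K V : Type*} [Field K] [AddCommGroup V] [Module K V]
    [FiniteDimensional K V] (H : Submodule K V) {d : ℕ} (hd : finrank K H + d = finrank K V) :
    ∃ Φ : V →ₗ[K] (Fin d → K), Function.Surjective Φ ∧ LinearMap.ker Φ = H := by
  have hQ : finrank K (V ⧸ H) = finrank K (Fin d → K) := by
    have := H.finrank_quotient_add_finrank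
    rw [finrank_fin_fun]
    omega
  let e := LinearEquiv.ofFinrankEq _ _ hQ
  refine ⟨e.toLinearMap ∘ₗ H.mkQ, e.surjective.comp H.mkQ_surjective, ?_⟩
  rw [LinearMap.ker_comp, LinearEquiv.ker, comap_bot, ker_mkQ]

theorem Matrix.rank_mul_transpose_toMatrix' {K m n p : Type*} [Field K] [Fintype m] [Fintype n]
    [Fintype p] [DecidableEq n] (E : Matrix m n K) (Φ : (n → K) →ₗ[K] p → K) :
    (E * (LinearMap.toMatrix' Φ)ᵀ).rank = finrank K ((span K (Set.range E)).map Φ) := by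
  rw [← rank_transpose, transpose_mul, transpose_transpose, rank, mulVecLin_mul,
    LinearMap.range_comp, range_mulVecLin, ← toLin'_apply', toLin'_toMatrix']
  rfl

theorem rankDisperser_rowspans_block_general
    {Fq : Type*} [Field Fq] {s k n : ℕ} (hsk : s < k)
    (E : Fin n → Matrix (Fin (s + 1)) (Fin k) Fq)
    (hdisp : ∀ M : Matrix (Fin k) (Fin (s + 1)) Fq, M.rank = s + 1 →
      ∃ i, ((E i) * M).rank = s + 1) :
    ∀ (L H : Submodule Fq (Fin k → Fq)), H ≤ L →
      Module.finrank Fq L = k - s → Module.finrank Fq H = k - s - 1 →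
      ∃ i, ¬ (Submodule.span Fq (Set.range (E i)) ⊓ L ≤ H) := by
  intro L H hHL hL hH
  obtain ⟨Φ, hΦ, hker⟩ := H.exists_surjective_ker_eq (d := s + 1)
    (by rw [hH, finrank_fin_fun]; omega)
  have hM : (LinearMap.toMatrix' Φ)ᵀ.rank = s + 1 := by
    rw [rank_transpose, rank, ← toLin'_apply', toLin'_toMatrix', LinearMap.range_eq_top.2 hΦ,
      finrank_top, finrank_fin_fun]
  obtain ⟨i, hi⟩ := hdisp _ hM
  refine ⟨i, not_inf_le_of_le_sup_of_lt ?_ (lt_of_le_of_ne hHL fun hHL' => ?_)⟩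
  · have hmap : (span Fq (Set.range (E i))).map Φ = ⊤ := by
      apply eq_top_of_finrank_eq
      rw [← rank_mul_transpose_toMatrix', hi, finrank_fin_fun]
    rw [sup_comm, ← hker, ← comap_map_eq, hmap, comap_top]
    exact le_top
  · rw [hHL', hL] at hH
    omega

/-- Let `s < k` be positive integers and `F_q` a finite field.
Suppose `E : Fin n → F_q^{(s+1)×k}` is a `(k, s+1)` lossless rank disperser:
for every `M ∈ F_q^{k×(s+1)}` of rank `s+1` there is `i` with
`rank (E i * M) = s+1`. Let `V_i = rowspan (E i)`. Then for every subspace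
`L ⊆ F_q^k` of codimension `s` and every hyperplane `H` of `L`, there exists
`i` with `V_i ∩ L ⊄ H`. -/
theorem rankDisperser_rowspans_block
    {Fq : Type*} [Field Fq] [Fintype Fq] {s k n : ℕ} (hs : 0 < s) (hsk : s < k)
    (E : Fin n → Matrix (Fin (s + 1)) (Fin k) Fq)
    (hdisp : ∀ M : Matrix (Fin k) (Fin (s + 1)) Fq, M.rank = s + 1 →
      ∃ i, ((E i) * M).rank = s + 1) :
    ∀ (L H : Submodule Fq (Fin k → Fq)), H ≤ L →
      Module.finrank Fq L = k - s → Module.finrank Fq H = k - s - 1 →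
      ∃ i, ¬ (Submodule.span Fq (Set.range (E i)) ⊓ L ≤ H) :=
  rankDisperser_rowspans_block_general hsk E hdisp
end
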